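/- Under exactly the hypotheses of Theorem 1 — fix N ≥ 2, m ≥ 1, dimensions n_1,…,n_N ≥ 1, matrices A_i ∈ ℝ^{m×n_i}, b ∈ ℝ^m, convex f_i : ℝ^{n_i} → ℝ, ρ > 0, 0 < γ < 2, Δ > 0, symmetric P_i with P_i − ρ(N/(2−γ) − 1)‖A_i‖²·I positive semidefinite; a pair (x*, λ*) with Σ_i A_i x_i* = b and L(x, λ*) ≥ L(x*, λ*) for all x; and sequences x_i^{[k]}, λ̂^{[k]}, d̂^{[k]} satisfying (i) ‖d̂^{[k]} − (Σ_i A_i x_i^{[k]} − b)‖ ≤ 2√m·Δ, (ii) λ̂^{[k+1]} = λ̂^{[k]} + γρ·d̂^{[k+1]}, (iii) for each i there is a subgradient g_i of f_i at x_i^{[k+1]} with g_i + A_iᵀλ̂^{[k]} + ρ·A_iᵀ(A_i(x_i^{[k+1]} − x_i^{[k]}) + d̂^{[k]}) + P_i(x_i^{[k+1]} − x_i^{[k]}) = 0, and (iv) ‖λ̂^{[k]} − λ*‖ ≤ M_λ, ‖d̂^{[k]}‖ ≤ M_x — set ε_i := (2−γ)/N. Then for every K ≥ 1: (1/K) Σ_{k=1}^K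 ½ Σ_{i=1}^N ‖x_i^{[k]} − x_i^{[k+1]}‖²_{ ρA_iᵀA_i + P_i − (ρ/ε_i)A_iᵀA_i } ≤ C/K + E_Δ, where C := ½ Σ_i ‖x_i^{[1]} − x_i*‖²_{ρA_iᵀA_i + P_i} + (1/(2γρ))·‖λ̂^{[1]} − λ*‖² and E_Δ := (8/γ + 4|γ−1|/γ + 2)·√m·Δ·M_λ + 4ρ√m·Δ·M_x. -/

import Mathlib

/-!
Lyapunov descent. With `Mᵢ = ρAᵢᵀAᵢ + Pᵢ`, the energy
`V = ½ Σᵢ ‖xᵢ − xᵢ*‖²_{Mᵢ} + ‖λ̂ − λ*‖² / (2γρ)` satisfies, at every iteration,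
`½ Σᵢ ‖xᵢᵏ − xᵢᵏ⁺¹‖²_{Mᵢ − (ρ/εᵢ)AᵢᵀAᵢ} ≤ Vᵏ − Vᵏ⁺¹ + O(Δ)`.
Testing the subgradient condition against `x*` and using the saddle inequality gives a three-point
identity in the `Mᵢ`-geometry; the dual update turns the multiplier term into a difference of
squares; Young's inequality with weight `εᵢ` absorbs the cross term `⟪Σᵢ Aᵢ(xᵢᵏ⁺¹ − xᵢᵏ), d̂ᵏ⁺¹⟫`,
and `N εᵢ = 2 − γ` makes the `‖d̂ᵏ⁺¹‖²` terms cancel exactly. The quantization errors only enter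
through inner products with vectors bounded by `M_λ` and `M_x`. Summing telescopes, and `V ≥ 0`
because the step-size condition forces `Pᵢ ⪰ 0`.
-/

open scoped RealInnerProductSpace

/-- Weighted squared seminorm `‖v‖²_M := vᵀ M v`. -/
noncomputable def wnormSq {k : ℕ} (M : Matrix (Fin k) (Fin k) ℝ)
    (v : EuclideanSpace ℝ (Fin k)) : ℝ :=
  dotProduct v (M.mulVec v)

/-- The spectral (ℓ²-operator) norm of a real matrix. -/
noncomputable def specNorm {m k : ℕ} (A : Matrix (Fin m) (Fin k) ℝ) : ℝ :=
  ‖LinearMap.toContinuousLinearMap (Matrix.toEuclideanLin A)‖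

/-- The Lagrangian `L(x, λ) := ∑_i f_i(x_i) + ⟨λ, ∑_i A_i x_i − b⟩`. -/
noncomputable def Lag {N m : ℕ} {n : Fin N → ℕ}
    (f : ∀ i, EuclideanSpace ℝ (Fin (n i)) → ℝ)
    (A : ∀ i, Matrix (Fin m) (Fin (n i)) ℝ) (b : EuclideanSpace ℝ (Fin m))
    (x : ∀ i, EuclideanSpace ℝ (Fin (n i))) (lam : EuclideanSpace ℝ (Fin m)) : ℝ :=
  (∑ i, f i (x i))
    + ⟪lam, (∑ i, (show EuclideanSpace ℝ (Fin m) from WithLp.toLp 2 ((A i).mulVec (x i)))) - b⟫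

/-- The gradient of the smooth part of the local proximal subproblem,
`Aᵀλ̂ + ρ·Aᵀ(A(xp − x) + d̂) + P(xp − x)`. -/
noncomputable def gradTerm {m k : ℕ} (A : Matrix (Fin m) (Fin k) ℝ)
    (P : Matrix (Fin k) (Fin k) ℝ) (ρ : ℝ)
    (lamHat dHat : EuclideanSpace ℝ (Fin m))
    (x xp : EuclideanSpace ℝ (Fin k)) : EuclideanSpace ℝ (Fin k) :=
  WithLp.toLp 2 (A.transpose.mulVec lamHat
    + ρ • A.transpose.mulVec
        ((show EuclideanSpace ℝ (Fin m) from WithLp.toLp 2 (A.mulVec (xp - x))) + dHat)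
    + P.mulVec (xp - x))

theorem inv_mul_sum_Icc_le_of_descent {q V : ℕ → ℝ} {E : ℝ} {K : ℕ} (hK : 1 ≤ K)
    (hq : ∀ k ∈ Finset.Icc 1 K, q k ≤ V k - V (k + 1) + E) (hV : 0 ≤ V (K + 1)) :
    (K : ℝ)⁻¹ * ∑ k ∈ Finset.Icc 1 K, q k ≤ V 1 / K + E := by
  have hK' : (0 : ℝ) < K := by exact_mod_cast hK
  have hsum : ∑ k ∈ Finset.Icc 1 K, q k ≤ V 1 - V (K + 1) + K * E :=
    calc ∑ k ∈ Finset.Icc 1 K, q k ≤ ∑ k ∈ Finset.Icc 1 K, (E - (V (k + 1) - V k)) :=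
          Finset.sum_le_sum fun k hk => by linarith [hq k hk]
      _ = V 1 - V (K + 1) + K * E := by
          rw [Finset.sum_sub_distrib, Finset.sum_Icc_sub hK, Finset.sum_const, Nat.card_Icc,
            nsmul_eq_mul, Nat.add_sub_cancel]
          ring
  rw [inv_mul_le_iff₀ hK', mul_add, mul_div_cancel₀ _ hK'.ne']
  linarith

section InnerProductSpace

variable {F : Type*} [NormedAddCommGroup F] [InnerProductSpace ℝ F]

theorem real_inner_le_of_norm_le {a b : F} {α β : ℝ} (ha : ‖a‖ ≤ α) (hb : ‖b‖ ≤ β) :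
    ⟪a, b⟫ ≤ α * β :=
  (real_inner_le_norm a b).trans
    (mul_le_mul ha hb (norm_nonneg b) ((norm_nonneg a).trans ha))

theorem real_inner_le_norm_sq_div_add {ε : ℝ} (hε : 0 < ε) (a b : F) :
    ⟪a, b⟫ ≤ ‖a‖ ^ 2 / (2 * ε) + ε / 2 * ‖b‖ ^ 2 := by
  have h : 0 ≤ ‖a‖ ^ 2 / (2 * ε) + ε / 2 * ‖b‖ ^ 2 - ‖a‖ * ‖b‖ := by
    have : ‖a‖ ^ 2 / (2 * ε) + ε / 2 * ‖b‖ ^ 2 - ‖a‖ * ‖b‖ = (‖a‖ - ε * ‖b‖) ^ 2 / (2 * ε) := by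
      field_simp
      ring
    rw [this]
    positivity
  linarith [real_inner_le_norm a b]

theorem real_inner_sum_le_norm_sq_div_add {ι : Type*} (s : Finset ι) (a : ι → F) (b : F) {ε : ℝ}
    (hε : 0 < ε) :
    ⟪∑ i ∈ s, a i, b⟫ ≤ (∑ i ∈ s, ‖a i‖ ^ 2) / (2 * ε) + s.card * ε / 2 * ‖b‖ ^ 2 := by
  rw [sum_inner, Finset.sum_div]
  calc ∑ i ∈ s, ⟪a i, b⟫ ≤ ∑ i ∈ s, (‖a i‖ ^ 2 / (2 * ε) + ε / 2 * ‖b‖ ^ 2) :=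
        Finset.sum_le_sum fun i _ => real_inner_le_norm_sq_div_add hε (a i) b
    _ = _ := by rw [Finset.sum_add_distrib, Finset.sum_const, nsmul_eq_mul]; ring

theorem real_inner_eq_of_eq_add_smul {u u' v : F} {c : ℝ} (hc : c ≠ 0) (h : u' = u + c • v) :
    ⟪u, v⟫ = (‖u'‖ ^ 2 - ‖u‖ ^ 2) / (2 * c) - c / 2 * ‖v‖ ^ 2 := by
  rw [h, norm_add_sq_real, norm_smul, real_inner_smul_right, mul_pow, Real.norm_eq_abs, sq_abs]
  field_simp
  ring

theorem le_inner_of_dual_update {ι : Type*} (s : Finset ι) (a : ι → F)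
    {γ ρ ε δ Mlam Mx : ℝ} (hγ : 0 < γ) (hρ : 0 < ρ) (hε : 0 < ε) (hsε : s.card * ε = 2 - γ)
    {lam lam' lamStar d d' r r' : F}
    (hlam' : lam' = lam + (γ * ρ) • d') (ha : ∑ i ∈ s, a i = r' - r)
    (he : ‖d - r‖ ≤ δ) (he' : ‖d' - r'‖ ≤ δ)
    (hlam : ‖lam - lamStar‖ ≤ Mlam) (hlam'_le : ‖lam' - lamStar‖ ≤ Mlam) (hd : ‖d‖ ≤ Mx) :
    (‖lam' - lamStar‖ ^ 2 - ‖lam - lamStar‖ ^ 2) / (2 * γ * ρ)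
        - ρ * (∑ i ∈ s, ‖a i‖ ^ 2) / (2 * ε) - ((1 + 4 / γ) * δ * Mlam + ρ * δ * Mx)
      ≤ ⟪lam - lamStar + ρ • d, r'⟫ := by
  have hγρ : γ * ρ ≠ 0 := (mul_pos hγ hρ).ne'
  -- `d = d' - (r' - r) - (e' - e)` with quantization errors `e = d - r`, `e' = d' - r'`.
  have hsplit : ⟪lam - lamStar + ρ • d, r'⟫
      = ⟪lam - lamStar, d'⟫ - ⟪lam - lamStar, d' - r'⟫
        + ρ * (‖d'‖ ^ 2 - ⟪∑ i ∈ s, a i, d'⟫ - ⟪(d' - r') - (d - r), d'⟫ - ⟪d, d' - r'⟫) := by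
    rw [ha, ← real_inner_self_eq_norm_sq]
    simp only [inner_add_left, inner_sub_left, inner_sub_right, real_inner_smul_left]
    ring
  have hdual : ⟪lam - lamStar, d'⟫
      = (‖lam' - lamStar‖ ^ 2 - ‖lam - lamStar‖ ^ 2) / (2 * (γ * ρ)) - γ * ρ / 2 * ‖d'‖ ^ 2 :=
    real_inner_eq_of_eq_add_smul hγρ (by rw [hlam']; abel)
  have hyoung := real_inner_sum_le_norm_sq_div_add s a d' hε
  rw [hsε] at hyoung
  have hE1 : ⟪lam - lamStar, d' - r'⟫ ≤ Mlam * δ := real_inner_le_of_norm_le hlam he'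
  have hE2 : ⟪d, d' - r'⟫ ≤ Mx * δ := real_inner_le_of_norm_le hd he'
  -- Writing `ρ • d'` as `γ⁻¹ • (lam' - lam)` bounds this term by `Mlam`: the `8/γ` in `E_Δ`.
  have hE3 : ρ * ⟪(d' - r') - (d - r), d'⟫ ≤ 4 / γ * δ * Mlam := by
    have hlam_sub : ‖lam' - lam‖ ≤ 2 * Mlam := by
      rw [← sub_sub_sub_cancel_right lam' lam lamStar]
      linarith [norm_sub_le (lam' - lamStar) (lam - lamStar)]
    have he2 : ‖(d' - r') - (d - r)‖ ≤ 2 * δ := by linarith [norm_sub_le (d' - r') (d - r)]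
    calc ρ * ⟪(d' - r') - (d - r), d'⟫ = γ⁻¹ * ⟪(d' - r') - (d - r), lam' - lam⟫ := by
          rw [hlam', add_sub_cancel_left, real_inner_smul_right]
          field_simp
      _ ≤ γ⁻¹ * (2 * δ * (2 * Mlam)) :=
          mul_le_mul_of_nonneg_left (real_inner_le_of_norm_le he2 hlam_sub) (inv_nonneg.mpr hγ.le)
      _ = 4 / γ * δ * Mlam := by ring
  rw [hsplit, hdual]
  linear_combination mul_le_mul_of_nonneg_left hyoung hρ.le + hE3
    + mul_le_mul_of_nonneg_left hE2 hρ.le + hE1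

end InnerProductSpace

open Matrix

section WeightedForm

variable {k m : ℕ}

noncomputable def wInner (M : Matrix (Fin k) (Fin k) ℝ) (v w : EuclideanSpace ℝ (Fin k)) : ℝ :=
  v.ofLp ⬝ᵥ M *ᵥ w.ofLp

theorem wInner_self (M : Matrix (Fin k) (Fin k) ℝ) (v : EuclideanSpace ℝ (Fin k)) :
    wInner M v v = wnormSq M v := rfl

theorem wInner_sub_left (M : Matrix (Fin k) (Fin k) ℝ) (u v w : EuclideanSpace ℝ (Fin k)) :
    wInner M (u - v) w = wInner M u w - wInner M v w := by
  simp [wInner, sub_dotProduct]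

theorem wInner_sub_right (M : Matrix (Fin k) (Fin k) ℝ) (u v w : EuclideanSpace ℝ (Fin k)) :
    wInner M u (v - w) = wInner M u v - wInner M u w := by
  simp [wInner, Matrix.mulVec_sub, dotProduct_sub]

theorem wInner_comm {M : Matrix (Fin k) (Fin k) ℝ} (hM : M.IsSymm)
    (v w : EuclideanSpace ℝ (Fin k)) :
    wInner M v w = wInner M w v := by
  rw [wInner, wInner, Matrix.dotProduct_mulVec, ← Matrix.mulVec_transpose, hM, dotProduct_comm]

theorem two_mul_wInner_sub_sub {M : Matrix (Fin k) (Fin k) ℝ} (hM : M.IsSymm)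
    (u v w : EuclideanSpace ℝ (Fin k)) :
    2 * wInner M (u - v) (u - w)
      = wnormSq M (u - v) + wnormSq M (u - w) - wnormSq M (w - v) := by
  rw [show w - v = (u - v) - (u - w) by abel]
  simp only [← wInner_self, wInner_sub_left, wInner_sub_right, wInner_comm hM w u,
    wInner_comm hM v u, wInner_comm hM w v]
  ring

theorem wnormSq_sub_comm (M : Matrix (Fin k) (Fin k) ℝ) (u v : EuclideanSpace ℝ (Fin k)) :
    wnormSq M (u - v) = wnormSq M (v - u) := by
  rw [← neg_sub v u, wnormSq, wnormSq, WithLp.ofLp_neg, Matrix.mulVec_neg, neg_dotProduct_neg]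

theorem wnormSq_sub (M M' : Matrix (Fin k) (Fin k) ℝ) (v : EuclideanSpace ℝ (Fin k)) :
    wnormSq (M - M') v = wnormSq M v - wnormSq M' v := by
  simp [wnormSq, Matrix.sub_mulVec, dotProduct_sub]

theorem wnormSq_smul (c : ℝ) (M : Matrix (Fin k) (Fin k) ℝ) (v : EuclideanSpace ℝ (Fin k)) :
    wnormSq (c • M) v = c * wnormSq M v := by
  simp [wnormSq, Matrix.smul_mulVec]

theorem wnormSq_transpose_mul_self (A : Matrix (Fin m) (Fin k) ℝ) (v : EuclideanSpace ℝ (Fin k)) :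
    wnormSq (A.transpose * A) v = ‖(WithLp.toLp 2 (A *ᵥ v) : EuclideanSpace ℝ (Fin m))‖ ^ 2 := by
  rw [← real_inner_self_eq_norm_sq, EuclideanSpace.inner_eq_star_dotProduct, wnormSq,
    ← Matrix.mulVec_mulVec, Matrix.dotProduct_mulVec, Matrix.vecMul_transpose]
  simp

theorem Matrix.PosSemidef.wnormSq_nonneg {M : Matrix (Fin k) (Fin k) ℝ} (hM : M.PosSemidef)
    (v : EuclideanSpace ℝ (Fin k)) : 0 ≤ wnormSq M v := by
  have h := hM.dotProduct_mulVec_nonneg v.ofLp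
  rwa [star_trivial] at h

theorem Matrix.PosSemidef.of_sub_smul_one {M : Matrix (Fin k) (Fin k) ℝ} {c : ℝ}
    (hM : (M - c • 1).PosSemidef) (hc : 0 ≤ c) : M.PosSemidef := by
  simpa using hM.add (Matrix.PosSemidef.one.smul hc)

theorem Matrix.PosSemidef.smul_transpose_mul_self_add (A : Matrix (Fin m) (Fin k) ℝ)
    {P : Matrix (Fin k) (Fin k) ℝ} (hP : P.PosSemidef) {ρ : ℝ} (hρ : 0 ≤ ρ) :
    (ρ • (A.transpose * A) + P).PosSemidef := by
  have hA := Matrix.posSemidef_conjTranspose_mul_self A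
  rw [Matrix.conjTranspose_eq_transpose_of_trivial] at hA
  exact (hA.smul hρ).add hP

theorem inner_gradTerm (A : Matrix (Fin m) (Fin k) ℝ) (P : Matrix (Fin k) (Fin k) ℝ) (ρ : ℝ)
    (lam d : EuclideanSpace ℝ (Fin m)) (x xp w : EuclideanSpace ℝ (Fin k)) :
    ⟪gradTerm A P ρ lam d x xp, w⟫
      = ⟪lam + ρ • d, (WithLp.toLp 2 (A *ᵥ w) : EuclideanSpace ℝ (Fin m))⟫
        + wInner (ρ • (A.transpose * A) + P) w (xp - x) := by
  simp only [gradTerm, wInner, EuclideanSpace.inner_eq_star_dotProduct, star_trivial,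
    WithLp.ofLp_add, WithLp.ofLp_smul, WithLp.ofLp_sub, dotProduct_add, dotProduct_smul,
    Matrix.add_mulVec, Matrix.smul_mulVec, ← Matrix.mulVec_mulVec, Matrix.dotProduct_mulVec w.ofLp,
    Matrix.vecMul_transpose, Matrix.mulVec_add, smul_eq_mul]
  ring

end WeightedForm

section ProximalJacobiADMM

variable {N m : ℕ} {n : Fin N → ℕ}

/-- Spelled exactly as inside `Lag` and the hypotheses of the main theorem, which therefore unfold
to it by `rfl`. -/
noncomputable def couplingResidual (A : ∀ i, Matrix (Fin m) (Fin (n i)) ℝ)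
    (b : EuclideanSpace ℝ (Fin m))
    (x : ∀ i, EuclideanSpace ℝ (Fin (n i))) : EuclideanSpace ℝ (Fin m) :=
  (∑ i, (show EuclideanSpace ℝ (Fin m) from WithLp.toLp 2 ((A i).mulVec (x i)))) - b

/-- The paper's `Vᵏ`; its value at `k = 1` is the constant `C`. -/
noncomputable def lyapunov (A : ∀ i, Matrix (Fin m) (Fin (n i)) ℝ)
    (P : ∀ i, Matrix (Fin (n i)) (Fin (n i)) ℝ) (ρ γ : ℝ)
    (xs : ∀ i, EuclideanSpace ℝ (Fin (n i))) (lamStar : EuclideanSpace ℝ (Fin m))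
    (x : ∀ i, EuclideanSpace ℝ (Fin (n i))) (lam : EuclideanSpace ℝ (Fin m)) : ℝ :=
  (1 / 2) * ∑ i, wnormSq (ρ • ((A i).transpose * A i) + P i) (x i - xs i)
    + (1 / (2 * γ * ρ)) * ‖lam - lamStar‖ ^ 2

variable {A : ∀ i, Matrix (Fin m) (Fin (n i)) ℝ} {b : EuclideanSpace ℝ (Fin m)}
  {P : ∀ i, Matrix (Fin (n i)) (Fin (n i)) ℝ} {ρ γ : ℝ}
  {xs : ∀ i, EuclideanSpace ℝ (Fin (n i))} {lamStar : EuclideanSpace ℝ (Fin m)}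

theorem couplingResidual_sub (A : ∀ i, Matrix (Fin m) (Fin (n i)) ℝ) (b : EuclideanSpace ℝ (Fin m))
    (y z : ∀ i, EuclideanSpace ℝ (Fin (n i))) :
    couplingResidual A b y - couplingResidual A b z
      = ∑ i, (WithLp.toLp 2 (A i *ᵥ (y i - z i).ofLp) : EuclideanSpace ℝ (Fin m)) := by
  simp [couplingResidual, Matrix.mulVec_sub, Finset.sum_sub_distrib]

theorem lyapunov_nonneg (hρ : 0 < ρ) (hγ : 0 < γ) (hP : ∀ i, (P i).PosSemidef)
    (x : ∀ i, EuclideanSpace ℝ (Fin (n i))) (lam : EuclideanSpace ℝ (Fin m)) :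
    0 ≤ lyapunov A P ρ γ xs lamStar x lam := by
  have hM i := (Matrix.PosSemidef.smul_transpose_mul_self_add (A i) (hP i) hρ.le).wnormSq_nonneg
  unfold lyapunov
  have := Finset.sum_nonneg fun i (_ : i ∈ Finset.univ) => hM i (x i - xs i)
  positivity

theorem sum_wInner_add_inner_couplingResidual_nonpos {f : ∀ i, EuclideanSpace ℝ (Fin (n i)) → ℝ}
    (hfeas : couplingResidual A b xs = 0)
    (hsaddle : ∀ x, Lag f A b xs lamStar ≤ Lag f A b x lamStar)
    {x x' : ∀ i, EuclideanSpace ℝ (Fin (n i))} {lam d : EuclideanSpace ℝ (Fin m)}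
    (hstat : ∀ i, ∃ g : EuclideanSpace ℝ (Fin (n i)),
      (∀ z, f i (x' i) + ⟪g, z - x' i⟫ ≤ f i z) ∧
      g + gradTerm (A i) (P i) ρ lam d (x i) (x' i) = 0) :
    ∑ i, wInner (ρ • ((A i).transpose * A i) + P i) (x' i - xs i) (x' i - x i)
      + ⟪lam - lamStar + ρ • d, couplingResidual A b x'⟫ ≤ 0 := by
  have hsub i : ⟪gradTerm (A i) (P i) ρ lam d (x i) (x' i), x' i - xs i⟫
      ≤ f i (xs i) - f i (x' i) := by
    obtain ⟨g, hg, hg0⟩ := hstat i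
    rw [eq_neg_of_add_eq_zero_right hg0, inner_neg_left, ← inner_neg_right, neg_sub]
    linarith [hg (xs i)]
  have hsum : ∑ i, ⟪gradTerm (A i) (P i) ρ lam d (x i) (x' i), x' i - xs i⟫
      = ⟪lam + ρ • d, couplingResidual A b x'⟫
        + ∑ i, wInner (ρ • ((A i).transpose * A i) + P i) (x' i - xs i) (x' i - x i) := by
    simp only [inner_gradTerm, Finset.sum_add_distrib, ← inner_sum]
    rw [← couplingResidual_sub, hfeas, sub_zero]
  have hLag : ∑ i, f i (xs i) ≤ ∑ i, f i (x' i) + ⟪lamStar, couplingResidual A b x'⟫ := by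
    have h := hsaddle x'
    change _ + ⟪lamStar, couplingResidual A b xs⟫ ≤ _ at h
    rwa [hfeas, inner_zero_right, add_zero] at h
  have hsum_le := Finset.sum_le_sum fun i (_ : i ∈ Finset.univ) => hsub i
  rw [hsum, Finset.sum_sub_distrib, inner_add_left] at hsum_le
  rw [inner_add_left, inner_sub_left]
  linarith

theorem lyapunov_descent (hρ : 0 < ρ) (hγ₀ : 0 < γ) (hγ₂ : γ < 2) (hN : 0 < N)
    (hPsymm : ∀ i, (P i).IsSymm) {f : ∀ i, EuclideanSpace ℝ (Fin (n i)) → ℝ}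
    (hfeas : couplingResidual A b xs = 0)
    (hsaddle : ∀ x, Lag f A b xs lamStar ≤ Lag f A b x lamStar)
    {x x' : ∀ i, EuclideanSpace ℝ (Fin (n i))} {lam lam' d d' : EuclideanSpace ℝ (Fin m)}
    {δ Mlam Mx : ℝ}
    (he : ‖d - couplingResidual A b x‖ ≤ δ) (he' : ‖d' - couplingResidual A b x'‖ ≤ δ)
    (hlam' : lam' = lam + (γ * ρ) • d')
    (hstat : ∀ i, ∃ g : EuclideanSpace ℝ (Fin (n i)),
      (∀ z, f i (x' i) + ⟪g, z - x' i⟫ ≤ f i z) ∧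
      g + gradTerm (A i) (P i) ρ lam d (x i) (x' i) = 0)
    (hlam : ‖lam - lamStar‖ ≤ Mlam) (hlam'_le : ‖lam' - lamStar‖ ≤ Mlam) (hd : ‖d‖ ≤ Mx) :
    (1 / 2) * ∑ i, wnormSq (ρ • ((A i).transpose * A i) + P i
        - (ρ / ((2 - γ) / (N : ℝ))) • ((A i).transpose * A i)) (x i - x' i)
      ≤ lyapunov A P ρ γ xs lamStar x lam - lyapunov A P ρ γ xs lamStar x' lam'
        + ((1 + 4 / γ) * δ * Mlam + ρ * δ * Mx) := by
  set ε := (2 - γ) / (N : ℝ) with hε_def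
  have hε : 0 < ε := div_pos (by linarith) (by exact_mod_cast hN)
  have hcard : ((Finset.univ : Finset (Fin N)).card : ℝ) * ε = 2 - γ := by
    rw [Finset.card_univ, Fintype.card_fin, hε_def]
    field_simp
  clear_value ε
  set M := fun i => ρ • ((A i).transpose * A i) + P i
  set a := fun i => (WithLp.toLp 2 (A i *ᵥ (x' i - x i).ofLp) : EuclideanSpace ℝ (Fin m))
  have hprimal : ∑ i, wInner (M i) (x' i - xs i) (x' i - x i)
      + ⟪lam - lamStar + ρ • d, couplingResidual A b x'⟫ ≤ 0 :=
    sum_wInner_add_inner_couplingResidual_nonpos hfeas hsaddle hstat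
  have hdual := le_inner_of_dual_update Finset.univ a hγ₀ hρ hε hcard hlam'
    (couplingResidual_sub A b x' x).symm he he' hlam hlam'_le hd
  have hthree : 2 * ∑ i, wInner (M i) (x' i - xs i) (x' i - x i)
      = ∑ i, wnormSq (M i) (x' i - xs i) + ∑ i, wnormSq (M i) (x' i - x i)
        - ∑ i, wnormSq (M i) (x i - xs i) := by
    rw [Finset.mul_sum, ← Finset.sum_add_distrib, ← Finset.sum_sub_distrib]
    refine Finset.sum_congr rfl fun i _ => two_mul_wInner_sub_sub ?_ _ _ _
    exact (Matrix.IsSymm.smul (Matrix.transpose_mul _ _) ρ).add (hPsymm i)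
  have hshift : ∑ i, wnormSq (M i - (ρ / ε) • ((A i).transpose * A i)) (x i - x' i)
      = ∑ i, wnormSq (M i) (x' i - x i) - ρ / ε * ∑ i, ‖a i‖ ^ 2 := by
    rw [Finset.mul_sum, ← Finset.sum_sub_distrib]
    refine Finset.sum_congr rfl fun i _ => ?_
    rw [wnormSq_sub_comm, wnormSq_sub, wnormSq_smul, wnormSq_transpose_mul_self]
  rw [hshift]
  unfold lyapunov
  linear_combination hprimal + hdual - (1 / 2) * hthree

end ProximalJacobiADMM

theorem qdpjadmm_successive_differences_general
    (N m : ℕ) (hN : 2 ≤ N)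
    (n : Fin N → ℕ)
    (A : ∀ i, Matrix (Fin m) (Fin (n i)) ℝ)
    (b : EuclideanSpace ℝ (Fin m))
    (f : ∀ i, EuclideanSpace ℝ (Fin (n i)) → ℝ)
    (ρ γ Δ : ℝ) (hρ : 0 < ρ) (hγ₀ : 0 < γ) (hγ₂ : γ < 2) (hΔ : 0 < Δ)
    (P : ∀ i, Matrix (Fin (n i)) (Fin (n i)) ℝ)
    (hPsymm : ∀ i, (P i).IsSymm)
    (hPpsd : ∀ i,
      (P i - (ρ * ((N : ℝ) / (2 - γ) - 1) * specNorm (A i) ^ 2) • 1).PosSemidef)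
    (xs : ∀ i, EuclideanSpace ℝ (Fin (n i)))
    (lamStar : EuclideanSpace ℝ (Fin m))
    (hfeas : (∑ i, (show EuclideanSpace ℝ (Fin m) from WithLp.toLp 2 ((A i).mulVec (xs i)))) = b)
    (hsaddle : ∀ x : ∀ i, EuclideanSpace ℝ (Fin (n i)),
      Lag f A b xs lamStar ≤ Lag f A b x lamStar)
    (x : ℕ → ∀ i, EuclideanSpace ℝ (Fin (n i)))
    (lamHat dHat : ℕ → EuclideanSpace ℝ (Fin m))
    (Mlam Mx : ℝ) (hMlam : 0 ≤ Mlam) (hMx : 0 ≤ Mx)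
    (hd : ∀ k, 1 ≤ k →
      ‖dHat k - ((∑ i, (show EuclideanSpace ℝ (Fin m) from WithLp.toLp 2 ((A i).mulVec (x k i)))) - b)‖
        ≤ 2 * Real.sqrt m * Δ)
    (hdual : ∀ k, 1 ≤ k → lamHat (k + 1) = lamHat k + (γ * ρ) • dHat (k + 1))
    (hstat : ∀ k, 1 ≤ k → ∀ i, ∃ g : EuclideanSpace ℝ (Fin (n i)),
      (∀ z, f i (x (k + 1) i) + ⟪g, z - x (k + 1) i⟫ ≤ f i z) ∧
      g + gradTerm (A i) (P i) ρ (lamHat k) (dHat k) (x k i) (x (k + 1) i) = 0)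
    (hbdd : ∀ k, 1 ≤ k → ‖lamHat k - lamStar‖ ≤ Mlam ∧ ‖dHat k‖ ≤ Mx) :
    ∀ K : ℕ, 1 ≤ K →
      (K : ℝ)⁻¹ * ∑ k ∈ Finset.Icc 1 K,
          ((1 / 2) * ∑ i,
            wnormSq
              (ρ • ((A i).transpose * A i) + P i
                - (ρ / ((2 - γ) / (N : ℝ))) • ((A i).transpose * A i))
              (x k i - x (k + 1) i))
        ≤ ((1 / 2) * ∑ i, wnormSq (ρ • ((A i).transpose * A i) + P i) (x 1 i - xs i)
              + (1 / (2 * γ * ρ)) * ‖lamHat 1 - lamStar‖ ^ 2) / K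
          + ((8 / γ + 4 * |γ - 1| / γ + 2) * Real.sqrt m * Δ * Mlam
              + 4 * ρ * Real.sqrt m * Δ * Mx) := by
  intro K hK
  have hP i : (P i).PosSemidef := by
    refine (hPpsd i).of_sub_smul_one (mul_nonneg (mul_nonneg hρ.le ?_) (sq_nonneg _))
    have : (2 : ℝ) ≤ N := by exact_mod_cast hN
    rw [sub_nonneg, one_le_div (by linarith)]
    linarith
  have hdescent k (hk : k ∈ Finset.Icc 1 K) :=
    have hk : 1 ≤ k := (Finset.mem_Icc.mp hk).1
    lyapunov_descent hρ hγ₀ hγ₂ (by omega) hPsymm (sub_eq_zero.mpr hfeas) hsaddle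
      (hd k hk) (hd (k + 1) (by omega)) (hdual k hk) (hstat k hk)
      (hbdd k hk).1 (hbdd (k + 1) (by omega)).1 (hbdd k hk).2
  refine (inv_mul_sum_Icc_le_of_descent (V := fun k => lyapunov A P ρ γ xs lamStar (x k) (lamHat k))
    hK hdescent (lyapunov_nonneg hρ hγ₀ hP _ _)).trans ?_
  have hΔMlam : 0 ≤ 4 * |γ - 1| / γ * (Real.sqrt m * Δ * Mlam) := by positivity
  have hΔMx : 0 ≤ ρ * (Real.sqrt m * Δ * Mx) := by positivity
  refine add_le_add le_rfl ?_
  linear_combination hΔMlam + 2 * hΔMx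

/-- **Corollary 1 (eq. (16)):** under exactly the hypotheses of Theorem 1,
with `ε_i := (2−γ)/N`, for every `K ≥ 1` the averaged weighted squared
successive differences of the primal iterates satisfy
`(1/K)∑_{k=1}^K ½∑_i ‖x^{[k]}_i − x^{[k+1]}_i‖²_{ρA_iᵀA_i + P_i − (ρ/ε_i)A_iᵀA_i}
  ≤ C/K + E_Δ`. -/
theorem qdpjadmm_successive_differences
    (N m : ℕ) (hN : 2 ≤ N) (hm : 1 ≤ m)
    (n : Fin N → ℕ) (hn : ∀ i, 1 ≤ n i)
    (A : ∀ i, Matrix (Fin m) (Fin (n i)) ℝ)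
    (b : EuclideanSpace ℝ (Fin m))
    (f : ∀ i, EuclideanSpace ℝ (Fin (n i)) → ℝ)
    (hf : ∀ i, ConvexOn ℝ Set.univ (f i))
    (ρ γ Δ : ℝ) (hρ : 0 < ρ) (hγ₀ : 0 < γ) (hγ₂ : γ < 2) (hΔ : 0 < Δ)
    (P : ∀ i, Matrix (Fin (n i)) (Fin (n i)) ℝ)
    (hPsymm : ∀ i, (P i).IsSymm)
    (hPpsd : ∀ i,
      (P i - (ρ * ((N : ℝ) / (2 - γ) - 1) * specNorm (A i) ^ 2) • 1).PosSemidef)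
    (xs : ∀ i, EuclideanSpace ℝ (Fin (n i)))
    (lamStar : EuclideanSpace ℝ (Fin m))
    (hfeas : (∑ i, (show EuclideanSpace ℝ (Fin m) from WithLp.toLp 2 ((A i).mulVec (xs i)))) = b)
    (hsaddle : ∀ x : ∀ i, EuclideanSpace ℝ (Fin (n i)),
      Lag f A b xs lamStar ≤ Lag f A b x lamStar)
    (x : ℕ → ∀ i, EuclideanSpace ℝ (Fin (n i)))
    (lamHat dHat : ℕ → EuclideanSpace ℝ (Fin m))
    (Mlam Mx : ℝ) (hMlam : 0 ≤ Mlam) (hMx : 0 ≤ Mx)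
    (hd : ∀ k, 1 ≤ k →
      ‖dHat k - ((∑ i, (show EuclideanSpace ℝ (Fin m) from WithLp.toLp 2 ((A i).mulVec (x k i)))) - b)‖
        ≤ 2 * Real.sqrt m * Δ)
    (hdual : ∀ k, 1 ≤ k → lamHat (k + 1) = lamHat k + (γ * ρ) • dHat (k + 1))
    (hstat : ∀ k, 1 ≤ k → ∀ i, ∃ g : EuclideanSpace ℝ (Fin (n i)),
      (∀ z, f i (x (k + 1) i) + ⟪g, z - x (k + 1) i⟫ ≤ f i z) ∧
      g + gradTerm (A i) (P i) ρ (lamHat k) (dHat k) (x k i) (x (k + 1) i) = 0)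
    (hbdd : ∀ k, 1 ≤ k → ‖lamHat k - lamStar‖ ≤ Mlam ∧ ‖dHat k‖ ≤ Mx) :
    ∀ K : ℕ, 1 ≤ K →
      (K : ℝ)⁻¹ * ∑ k ∈ Finset.Icc 1 K,
          ((1 / 2) * ∑ i,
            wnormSq
              (ρ • ((A i).transpose * A i) + P i
                - (ρ / ((2 - γ) / (N : ℝ))) • ((A i).transpose * A i))
              (x k i - x (k + 1) i))
        ≤ ((1 / 2) * ∑ i, wnormSq (ρ • ((A i).transpose * A i) + P i) (x 1 i - xs i)
              + (1 / (2 * γ * ρ)) * ‖lamHat 1 - lamStar‖ ^ 2) / K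
          + ((8 / γ + 4 * |γ - 1| / γ + 2) * Real.sqrt m * Δ * Mlam
              + 4 * ρ * Real.sqrt m * Δ * Mx) :=
  qdpjadmm_successive_differences_general N m hN n A b f ρ γ Δ hρ hγ₀ hγ₂ hΔ P hPsymm hPpsd xs
    lamStar hfeas hsaddle x lamHat dHat Mlam Mx hMlam hMx hd hdual hstat hbdd
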